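/- arXiv:2504.02142 — 2 statements merged into one kernel-verified Lean document; each statement's English description precedes it below -/
import Mathlib

section
/- Let G_p, G_c be independent random variables valued in (0,1] with E[G_c] - E[G_p] = delta > 0 and common variance sigma^2. Then P(L(G_p) <= L(G_c)) <= 1 - (delta^2/4)^2 / (sigma^2 + delta^2/4)^2, where L(G) = -log G; in particular, as sigma -> 0 the probability that a loss-based threshold ranks the poison sample below the clean sample tends to 0. -/
/-! By Cantelli's inequality, `G_p < E[G_p] + δ/2` and `G_c > E[G_c] - δ/2` each hold with
probability at least `q = (δ/2)² / (σ² + (δ/2)²)`, so by independence both hold with probability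
at least `q²`. Together they force `G_p < G_c`, i.e. `L(G_c) < L(G_p)`. -/

open MeasureTheory ProbabilityTheory

namespace ProbabilityTheory

variable {Ω : Type*} [MeasurableSpace Ω] {μ : Measure Ω} [IsProbabilityMeasure μ] {X : Ω → ℝ}
  {t : ℝ}

/-- **Cantelli's inequality**. -/
theorem measureReal_sub_integral_ge_le (hX : MemLp X 2 μ) (ht : 0 < t) :
    μ.real {ω | t ≤ X ω - μ[X]} ≤ Var[X; μ] / (Var[X; μ] + t ^ 2) := by
  set v := Var[X; μ]
  -- Markov's inequality for `(X - μ[X] + u) ^ 2`, with the shift `u = v / t` that optimizes it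
  set u := v / t
  have hu : 0 ≤ u := div_nonneg (variance_nonneg X μ) ht.le
  set Y : Ω → ℝ := fun ω ↦ X ω + (u - μ[X])
  have hY : MemLp Y 2 μ := hX.add (memLp_const _)
  have hY_mean : μ[Y] = u := by
    simp [Y, integral_add (hX.integrable one_le_two) (integrable_const _)]
  have hY_sq : μ[Y ^ 2] = v + u ^ 2 := by
    have := variance_eq_sub hY
    rw [variance_add_const hX.aestronglyMeasurable, hY_mean] at this
    linarith
  have hmarkov := mul_meas_ge_le_integral_of_nonneg (ae_of_all μ fun ω ↦ sq_nonneg (Y ω))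
    hY.integrable_sq ((t + u) ^ 2)
  have hsub : {ω | t ≤ X ω - μ[X]} ⊆ {ω | (t + u) ^ 2 ≤ Y ω ^ 2} := fun ω hω ↦ by
    simp only [Set.mem_ofPred_eq, Y] at hω ⊢
    exact pow_le_pow_left₀ (by positivity) (by linarith) 2
  calc μ.real {ω | t ≤ X ω - μ[X]}
      ≤ μ.real {ω | (t + u) ^ 2 ≤ Y ω ^ 2} := measureReal_mono hsub
    _ ≤ (v + u ^ 2) / (t + u) ^ 2 := by
      rw [le_div_iff₀ (by positivity), mul_comm, ← hY_sq]
      exact hmarkov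
    _ = v / (v + t ^ 2) := by
      simp only [u]
      field_simp
      ring

theorem le_measureReal_lt_integral_add (hX : MemLp X 2 μ) (ht : 0 < t) :
    t ^ 2 / (Var[X; μ] + t ^ 2) ≤ μ.real {ω | X ω < μ[X] + t} := by
  have hcompl : {ω | X ω < μ[X] + t} = {ω | t ≤ X ω - μ[X]}ᶜ := by
    ext ω
    simp only [Set.mem_ofPred_eq, Set.mem_compl_iff, not_le]
    constructor <;> intro h <;> linarith
  have hnull : NullMeasurableSet {ω | t ≤ X ω - μ[X]} μ :=
    nullMeasurableSet_le aemeasurable_const (hX.aemeasurable.sub_const _)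
  have hsplit : t ^ 2 / (Var[X; μ] + t ^ 2) = 1 - Var[X; μ] / (Var[X; μ] + t ^ 2) := by
    have : 0 < Var[X; μ] + t ^ 2 := by positivity [variance_nonneg X μ]
    field_simp
    ring
  rw [hcompl, probReal_compl_eq_one_sub₀ hnull, hsplit]
  linarith [measureReal_sub_integral_ge_le hX ht]

theorem le_measureReal_integral_sub_lt (hX : MemLp X 2 μ) (ht : 0 < t) :
    t ^ 2 / (Var[X; μ] + t ^ 2) ≤ μ.real {ω | μ[X] - t < X ω} := by
  have h := le_measureReal_lt_integral_add hX.neg ht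
  simp only [variance_neg, Pi.neg_apply, integral_neg] at h
  convert h using 2
  ext ω
  simp only [Set.mem_ofPred_eq]
  constructor <;> intro h <;> linarith

end ProbabilityTheory

/-- Complement formulation of Theorem 1: for independent `G_p, G_c` valued in `(0,1]`
with mean gap `δ = μ_c - μ_p > 0` and common variance `σ²`, the probability that the
cross-entropy loss `L(G) = -log G` ranks the poison below the clean sample satisfies
`P(L(G_p) ≤ L(G_c)) ≤ 1 - (δ²/4)² / (σ² + δ²/4)²`. -/
theorem loss_misranking_prob_le
    {Ω : Type*} [MeasurableSpace Ω] (μ : Measure Ω) [IsProbabilityMeasure μ]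
    (Gp Gc : Ω → ℝ) (hGp : Measurable Gp) (hGc : Measurable Gc)
    (hrp : ∀ ω, Gp ω ∈ Set.Ioc (0 : ℝ) 1) (hrc : ∀ ω, Gc ω ∈ Set.Ioc (0 : ℝ) 1)
    (hind : IndepFun Gp Gc μ)
    (δ σ : ℝ) (hδ : (∫ ω, Gc ω ∂μ) - (∫ ω, Gp ω ∂μ) = δ) (hδpos : 0 < δ)
    (hvp : variance Gp μ = σ ^ 2) (hvc : variance Gc μ = σ ^ 2) :
    μ {ω | -Real.log (Gp ω) ≤ -Real.log (Gc ω)} ≤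
      ENNReal.ofReal (1 - (δ ^ 2 / 4) ^ 2 / (σ ^ 2 + δ ^ 2 / 4) ^ 2) := by
  have hp : MemLp Gp 2 μ :=
    memLp_of_bounded (ae_of_all μ fun ω ↦ Set.Ioc_subset_Icc_self (hrp ω)) hGp.aestronglyMeasurable 2
  have hc : MemLp Gc 2 μ :=
    memLp_of_bounded (ae_of_all μ fun ω ↦ Set.Ioc_subset_Icc_self (hrc ω)) hGc.aestronglyMeasurable 2
  set q := (δ / 2) ^ 2 / (σ ^ 2 + (δ / 2) ^ 2)
  set A := Gp ⁻¹' Set.Iio (μ[Gp] + δ / 2) ∩ Gc ⁻¹' Set.Ioi (μ[Gc] - δ / 2)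
  have hA : q ^ 2 ≤ μ.real A := by
    have hpA := le_measureReal_lt_integral_add hp (half_pos hδpos)
    have hcA := le_measureReal_integral_sub_lt hc (half_pos hδpos)
    rw [hvp] at hpA
    rw [hvc] at hcA
    rw [measureReal_def, hind.measure_inter_preimage_eq_mul _ _ measurableSet_Iio measurableSet_Ioi,
      ENNReal.toReal_mul, sq]
    exact mul_le_mul hpA hcA (by positivity) measureReal_nonneg
  have hloss : {ω | -Real.log (Gp ω) ≤ -Real.log (Gc ω)} ⊆ Aᶜ := by
    rintro ω hω ⟨hpω, hcω⟩
    simp only [Set.mem_preimage, Set.mem_Iio, Set.mem_Ioi] at hpω hcω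
    have := Real.log_lt_log (hrp ω).1 (show Gp ω < Gc ω by linarith)
    simp only [Set.mem_ofPred_eq] at hω
    linarith
  have hA_meas : MeasurableSet A := (hGp measurableSet_Iio).inter (hGc measurableSet_Ioi)
  calc μ {ω | -Real.log (Gp ω) ≤ -Real.log (Gc ω)}
      ≤ μ Aᶜ := measure_mono hloss
    _ = ENNReal.ofReal (1 - μ.real A) := by
      rw [← probReal_compl_eq_one_sub hA_meas, ofReal_measureReal]
    _ ≤ ENNReal.ofReal (1 - q ^ 2) := ENNReal.ofReal_le_ofReal (by linarith)
    _ = ENNReal.ofReal (1 - (δ ^ 2 / 4) ^ 2 / (σ ^ 2 + δ ^ 2 / 4) ^ 2) := by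
      rw [div_pow]
      ring_nf
end

section
/- Let X, Y be independent real random variables with E[X] = mu_x, E[Y] = mu_y, mu_x < mu_y, Var(X) = sigma_x^2, Var(Y) = sigma_y^2 (both finite). Then with t = (mu_y - mu_x)/2, P(X < Y) >= (t^2/(sigma_x^2 + t^2)) * (t^2/(sigma_y^2 + t^2)). -/
/-!
With `m` the midpoint of the two means and `t` half their gap, `{X < m} ∩ {m < Y} ⊆ {X < Y}`,
and by independence the intersection has probability `P(X < m) P(m < Y)`. Each factor is bounded
below by Cantelli's one-sided inequality `P(Z ≥ E Z + t) ≤ Var Z / (Var Z + t²)`, applied to `X`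
and to `-Y`.
-/

open MeasureTheory ProbabilityTheory

namespace ProbabilityTheory

variable {Ω : Type*} [MeasurableSpace Ω] {μ : Measure Ω} {X : Ω → ℝ}

theorem IndepFun.measure_lt_mul_measure_gt_le_measure_lt {Y : Ω → ℝ} (hXY : IndepFun X Y μ)
    (m : ℝ) : μ {ω | X ω < m} * μ {ω | m < Y ω} ≤ μ {ω | X ω < Y ω} :=
  (hXY.measure_inter_preimage_eq_mul (Set.Iio m) (Set.Ioi m) measurableSet_Iio
    measurableSet_Ioi).symm.trans_le (measure_mono fun _ ⟨hX, hY⟩ ↦ lt_trans (α := ℝ) hX hY)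

variable [IsProbabilityMeasure μ]

theorem measureReal_integral_add_le_le_variance_div (hX : MemLp X 2 μ) {t : ℝ} (ht : 0 < t) :
    μ.real {ω | μ[X] + t ≤ X ω} ≤ Var[X; μ] / (Var[X; μ] + t ^ 2) := by
  set V := Var[X; μ]
  have hV : 0 ≤ V := variance_nonneg X μ
  -- Markov's inequality for `(X - μ[X] + u)²`; the shift `u = V / t` optimises the bound.
  set u := V / t
  have htu : 0 < t + u := add_pos_of_pos_of_nonneg ht (div_nonneg hV ht.le)
  set Z : Ω → ℝ := fun ω ↦ X ω + (u - μ[X])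
  have hZ : MemLp Z 2 μ := hX.add (memLp_const _)
  have hZ_mean : μ[Z] = u := by
    simp only [Z, integral_add (hX.integrable one_le_two) (integrable_const _), integral_const,
      probReal_univ, one_smul]
    ring
  have hZ_var : Var[Z; μ] = V := variance_add_const hX.1 _
  have hZ_sq : ∫ ω, Z ω ^ 2 ∂μ = V + u ^ 2 := by
    have := variance_eq_sub hZ
    simp only [Pi.pow_apply, hZ_mean, hZ_var] at this
    linarith
  have hsub : {ω | μ[X] + t ≤ X ω} ⊆ {ω | (t + u) ^ 2 ≤ Z ω ^ 2} := fun ω (hω : μ[X] + t ≤ X ω) ↦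
    pow_le_pow_left₀ htu.le (by simp only [Z]; linarith) 2
  have hmarkov := mul_meas_ge_le_integral_of_nonneg (ae_of_all _ fun ω ↦ sq_nonneg (Z ω))
    hZ.integrable_sq ((t + u) ^ 2)
  rw [hZ_sq] at hmarkov
  calc μ.real {ω | μ[X] + t ≤ X ω} ≤ μ.real {ω | (t + u) ^ 2 ≤ Z ω ^ 2} := measureReal_mono hsub
    _ ≤ (V + u ^ 2) / (t + u) ^ 2 := by rw [le_div_iff₀ (by positivity)]; linarith
    _ = V / (V + t ^ 2) := by
      simp only [u]
      field_simp
      ring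

theorem div_le_measureReal_lt_integral_add (hX : MemLp X 2 μ) {t : ℝ} (ht : 0 < t) :
    t ^ 2 / (Var[X; μ] + t ^ 2) ≤ μ.real {ω | X ω < μ[X] + t} := by
  have hV : 0 < Var[X; μ] + t ^ 2 := add_pos_of_nonneg_of_pos (variance_nonneg X μ) (by positivity)
  have hcompl : {ω | X ω < μ[X] + t} = {ω | μ[X] + t ≤ X ω}ᶜ := by ext; simp
  have hsplit : t ^ 2 / (Var[X; μ] + t ^ 2) = 1 - Var[X; μ] / (Var[X; μ] + t ^ 2) := by
    field_simp
    ring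
  rw [hcompl, probReal_compl_eq_one_sub₀ (nullMeasurableSet_le aemeasurable_const hX.aemeasurable),
    hsplit]
  linarith [measureReal_integral_add_le_le_variance_div hX ht]

theorem div_le_measureReal_integral_sub_lt (hX : MemLp X 2 μ) {t : ℝ} (ht : 0 < t) :
    t ^ 2 / (Var[X; μ] + t ^ 2) ≤ μ.real {ω | μ[X] - t < X ω} := by
  have hset : {ω | μ[X] - t < X ω} = {ω | -X ω < μ[-X] + t} := by
    ext
    simp only [Set.mem_ofPred_eq, Pi.neg_apply, integral_neg]
    constructor <;> intro <;> linarith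
  rw [hset, ← variance_neg]
  exact div_le_measureReal_lt_integral_add hX.neg ht

end ProbabilityTheory

theorem prob_lt_ge_product_unequal_variances_general
    {Ω : Type*} [MeasurableSpace Ω] (μ : Measure Ω) [IsProbabilityMeasure μ]
    (X Y : Ω → ℝ)
    (hLx : MemLp X 2 μ) (hLy : MemLp Y 2 μ)
    (hind : IndepFun X Y μ)
    (μx μy σx σy : ℝ)
    (hμx : (∫ ω, X ω ∂μ) = μx) (hμy : (∫ ω, Y ω ∂μ) = μy) (hlt : μx < μy)
    (hvx : variance X μ = σx ^ 2) (hvy : variance Y μ = σy ^ 2) :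
    μ {ω | X ω < Y ω} ≥
      ENNReal.ofReal
        ((((μy - μx) / 2) ^ 2 / (σx ^ 2 + ((μy - μx) / 2) ^ 2)) *
          (((μy - μx) / 2) ^ 2 / (σy ^ 2 + ((μy - μx) / 2) ^ 2))) := by
  set t := (μy - μx) / 2
  have ht : 0 < t := by simp only [t]; linarith
  have hX_lt : t ^ 2 / (σx ^ 2 + t ^ 2) ≤ μ.real {ω | X ω < (μx + μy) / 2} := by
    have := div_le_measureReal_lt_integral_add hLx ht
    rwa [hvx, hμx, show μx + t = (μx + μy) / 2 by ring] at this
  have hY_gt : t ^ 2 / (σy ^ 2 + t ^ 2) ≤ μ.real {ω | (μx + μy) / 2 < Y ω} := by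
    have := div_le_measureReal_integral_sub_lt hLy ht
    rwa [hvy, hμy, show μy - t = (μx + μy) / 2 by ring] at this
  rw [ge_iff_le, ENNReal.ofReal_mul (by positivity)]
  exact (mul_le_mul' (ENNReal.ofReal_le_of_le_toReal hX_lt)
    (ENNReal.ofReal_le_of_le_toReal hY_gt)).trans (hind.measure_lt_mul_measure_gt_le_measure_lt _)

/-- Generalization of Theorem 1's argument to unequal variances: for independent real
random variables `X, Y` with means `μ_x < μ_y` and finite variances `σ_x², σ_y²`,
setting `t = (μ_y - μ_x)/2`, one has
`P(X < Y) ≥ (t²/(σ_x² + t²)) * (t²/(σ_y² + t²))`. -/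
theorem prob_lt_ge_product_unequal_variances
    {Ω : Type*} [MeasurableSpace Ω] (μ : Measure Ω) [IsProbabilityMeasure μ]
    (X Y : Ω → ℝ) (hX : Measurable X) (hY : Measurable Y)
    (hLx : MemLp X 2 μ) (hLy : MemLp Y 2 μ)
    (hind : IndepFun X Y μ)
    (μx μy σx σy : ℝ)
    (hμx : (∫ ω, X ω ∂μ) = μx) (hμy : (∫ ω, Y ω ∂μ) = μy) (hlt : μx < μy)
    (hvx : variance X μ = σx ^ 2) (hvy : variance Y μ = σy ^ 2) :
    μ {ω | X ω < Y ω} ≥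
      ENNReal.ofReal
        ((((μy - μx) / 2) ^ 2 / (σx ^ 2 + ((μy - μx) / 2) ^ 2)) *
          (((μy - μx) / 2) ^ 2 / (σy ^ 2 + ((μy - μx) / 2) ^ 2))) :=
  prob_lt_ge_product_unequal_variances_general μ X Y hLx hLy hind μx μy σx σy hμx hμy hlt hvx hvy
end
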